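/- (Main Theorem) The subgroup of GL(4, ZMod 5) generated by à and T̃ is exactly Γ̂: a matrix X over ZMod 5 is a product of the matrices Ã, T̃ and their inverses if and only if X is of the form !![1, n, 3*n^2+2*n, a; 0, 1, n, b; 0, 0, 1, c; 0, 0, 0, 1] for some n, a, b, c ∈ ZMod 5. -/

import Mathlib

open Matrix

instance : Fact (Nat.Prime 5) := ⟨by norm_num⟩

/-- The reduction mod 5 of `P⁻¹A⁻¹P`. -/
def Atil : Matrix (Fin 4) (Fin 4) (ZMod 5) :=
  !![1, 1, 0, 0; 0, 1, 1, 4; 0, 0, 1, 4; 0, 0, 0, 1]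

/-- The reduction mod 5 of `P⁻¹T⁻¹P`. -/
def Ttil : Matrix (Fin 4) (Fin 4) (ZMod 5) :=
  !![1, 0, 0, 0; 0, 1, 0, 0; 0, 0, 1, 1; 0, 0, 0, 1]

/-- `Ã` as an element of `GL(4, ℤ/5ℤ)`. -/
def AtilGL : GL (Fin 4) (ZMod 5) :=
  Matrix.GeneralLinearGroup.mkOfDetNeZero Atil (by decide)

/-- `T̃` as an element of `GL(4, ℤ/5ℤ)`. -/
def TtilGL : GL (Fin 4) (ZMod 5) :=
  Matrix.GeneralLinearGroup.mkOfDetNeZero Ttil (by decide)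

/-!
In `ZMod 5` we have `3n² + 2n = n(n - 1)/2`, and writing `(n, a, b, c)` for the matrix of `Γ̂`,
  `(n, a, b, c)(m, a', b', c') =`
    `(n + m, a + a' + n b' + (3n² + 2n) c', b + b' + n c', c + c')`.
So `Γ̂` is a subgroup, and it contains `Ã = (1, 0, 4, 4)` and `T̃ = (0, 0, 0, 1)`. Conversely,
the elements with `n = 0` form a copy of `(ZMod 5)³` spanned by `T̃`,
`E_b = [Ã, T̃] = (0, 0, 1, 0)` and `E_a = [Ã, E_b] = (0, 1, 0, 0)`, and every element of `Γ̂`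
is `Ãⁿ` times one of them.
-/

open scoped commutatorElement

theorem Subgroup.commutatorElement_mem {G : Type*} [Group G] {H : Subgroup G} {g h : G}
    (hg : g ∈ H) (hh : h ∈ H) : ⁅g, h⁆ ∈ H := by
  rw [commutatorElement_def]
  exact mul_mem (mul_mem (mul_mem hg hh) (inv_mem hg)) (inv_mem hh)

def gammaMat (n a b c : ZMod 5) : Matrix (Fin 4) (Fin 4) (ZMod 5) :=
  !![1, n, 3 * n ^ 2 + 2 * n, a; 0, 1, n, b; 0, 0, 1, c; 0, 0, 0, 1]

theorem gammaMat_mul (n a b c m a' b' c' : ZMod 5) :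
    gammaMat n a b c * gammaMat m a' b' c' =
      gammaMat (n + m) (a + a' + n * b' + (3 * n ^ 2 + 2 * n) * c') (b + b' + n * c')
        (c + c') := by
  have hq : 3 * (n + m) ^ 2 + 2 * (n + m) = 3 * n ^ 2 + 2 * n + (3 * m ^ 2 + 2 * m) + n * m := by
    ring_nf
    reduce_mod_char
  ext i j
  fin_cases i <;> fin_cases j <;>
    simp only [gammaMat, mul_apply, Fin.sum_univ_four, of_apply, cons_val', cons_val_fin_one,
      cons_val_zero, cons_val_one, cons_val, Fin.zero_eta, Fin.mk_one, Fin.reduceFinMk] <;>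
    first | ring1 | linear_combination -hq

theorem gammaMat_zero : gammaMat 0 0 0 0 = 1 := by decide

theorem gammaMat_inv_mul (n a b c : ZMod 5) :
    gammaMat (-n) (-a + n * b - (3 * n ^ 2 - 2 * n) * c) (-b + n * c) (-c) * gammaMat n a b c =
      1 := by
  rw [gammaMat_mul, ← gammaMat_zero]
  congr 1 <;> ring

theorem gammaMat_zero_pow (a b c : ZMod 5) (k : ℕ) :
    gammaMat 0 a b c ^ k = gammaMat 0 (k * a) (k * b) (k * c) := by
  induction k with
  | zero => simp [gammaMat_zero]
  | succ k ih =>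
    rw [pow_succ, ih, gammaMat_mul]
    push_cast
    congr 1 <;> ring

theorem exists_gammaMat_pow_eq (n a b c : ZMod 5) (k : ℕ) :
    ∃ a' b' c', gammaMat n a b c ^ k = gammaMat (k * n) a' b' c' := by
  induction k with
  | zero => exact ⟨0, 0, 0, by simp [gammaMat_zero]⟩
  | succ k ih =>
    obtain ⟨a', b', c', h⟩ := ih
    rw [pow_succ, h, gammaMat_mul, Nat.cast_succ, add_one_mul]
    exact ⟨_, _, _, rfl⟩

theorem gammaMat_zero_eq_pow_mul (a b c : ZMod 5) :
    gammaMat 0 a b c =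
      gammaMat 0 1 0 0 ^ a.val * gammaMat 0 0 1 0 ^ b.val * gammaMat 0 0 0 1 ^ c.val := by
  simp only [gammaMat_zero_pow, ZMod.natCast_val, ZMod.cast_id', id, gammaMat_mul]
  congr 1 <;> ring

theorem exists_gammaMat_eq_mul_gammaMat_zero (n α β γ a b c : ZMod 5) :
    ∃ x y z, gammaMat n a b c = gammaMat n α β γ * gammaMat 0 x y z := by
  set z := c - γ
  set y := b - β - n * z
  refine ⟨a - α - n * y - (3 * n ^ 2 + 2 * n) * z, y, z, ?_⟩
  rw [gammaMat_mul]
  congr 1 <;> ring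

theorem exists_gammaMat_eq_pow_mul (α β γ n a b c : ZMod 5) : ∃ x y z : ℕ,
    gammaMat n a b c = gammaMat 1 α β γ ^ n.val * gammaMat 0 1 0 0 ^ x * gammaMat 0 0 1 0 ^ y *
      gammaMat 0 0 0 1 ^ z := by
  obtain ⟨α', β', γ', hpow⟩ := exists_gammaMat_pow_eq 1 α β γ n.val
  rw [ZMod.natCast_zmod_val, mul_one] at hpow
  obtain ⟨x, y, z, h⟩ := exists_gammaMat_eq_mul_gammaMat_zero n α' β' γ' a b c
  refine ⟨x.val, y.val, z.val, ?_⟩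
  rw [h, ← hpow, gammaMat_zero_eq_pow_mul]
  simp only [mul_assoc]

theorem val_inv_of_val_eq_gammaMat {g : GL (Fin 4) (ZMod 5)} {n a b c : ZMod 5}
    (hg : (g : Matrix (Fin 4) (Fin 4) (ZMod 5)) = gammaMat n a b c) :
    ((g⁻¹ : GL (Fin 4) (ZMod 5)) : Matrix (Fin 4) (Fin 4) (ZMod 5)) =
      gammaMat (-n) (-a + n * b - (3 * n ^ 2 - 2 * n) * c) (-b + n * c) (-c) :=
  Units.inv_eq_of_mul_eq_one_left (hg ▸ gammaMat_inv_mul n a b c)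

def gammaHat : Subgroup (GL (Fin 4) (ZMod 5)) where
  carrier := {X | ∃ n a b c, (X : Matrix (Fin 4) (Fin 4) (ZMod 5)) = gammaMat n a b c}
  one_mem' := ⟨0, 0, 0, 0, gammaMat_zero.symm⟩
  mul_mem' := by
    rintro X Y ⟨n, a, b, c, hX⟩ ⟨m, a', b', c', hY⟩
    exact ⟨_, _, _, _, by rw [Units.val_mul, hX, hY, gammaMat_mul]⟩
  inv_mem' := by
    rintro X ⟨n, a, b, c, hX⟩
    exact ⟨_, _, _, _, val_inv_of_val_eq_gammaMat hX⟩

theorem val_AtilGL : (AtilGL : Matrix (Fin 4) (Fin 4) (ZMod 5)) = gammaMat 1 0 4 4 := by decide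

theorem val_TtilGL : (TtilGL : Matrix (Fin 4) (Fin 4) (ZMod 5)) = gammaMat 0 0 0 1 := by decide

theorem val_commutator_AtilGL_TtilGL :
    ((⁅AtilGL, TtilGL⁆ : GL (Fin 4) (ZMod 5)) : Matrix (Fin 4) (Fin 4) (ZMod 5)) =
      gammaMat 0 0 1 0 := by
  simp only [commutatorElement_def, Units.val_mul, val_AtilGL, val_TtilGL,
    val_inv_of_val_eq_gammaMat val_AtilGL, val_inv_of_val_eq_gammaMat val_TtilGL, gammaMat_mul]
  decide

theorem val_commutator_AtilGL_commutator :
    ((⁅AtilGL, ⁅AtilGL, TtilGL⁆⁆ : GL (Fin 4) (ZMod 5)) : Matrix (Fin 4) (Fin 4) (ZMod 5)) =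
      gammaMat 0 1 0 0 := by
  simp only [commutatorElement_def AtilGL (⁅AtilGL, TtilGL⁆ : GL (Fin 4) (ZMod 5)), Units.val_mul,
    val_AtilGL, val_commutator_AtilGL_TtilGL, val_inv_of_val_eq_gammaMat val_AtilGL,
    val_inv_of_val_eq_gammaMat val_commutator_AtilGL_TtilGL, gammaMat_mul]
  decide

theorem closure_AtilGL_TtilGL_le_gammaHat : Subgroup.closure {AtilGL, TtilGL} ≤ gammaHat := by
  rw [Subgroup.closure_le]
  rintro X (rfl | rfl)
  · exact ⟨_, _, _, _, val_AtilGL⟩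
  · exact ⟨_, _, _, _, val_TtilGL⟩

theorem gammaHat_le_closure_AtilGL_TtilGL : gammaHat ≤ Subgroup.closure {AtilGL, TtilGL} := by
  rintro X ⟨n, a, b, c, hX⟩
  set H := Subgroup.closure {AtilGL, TtilGL}
  have hA : AtilGL ∈ H := Subgroup.subset_closure (by simp)
  have hT : TtilGL ∈ H := Subgroup.subset_closure (by simp)
  have hEb : ⁅AtilGL, TtilGL⁆ ∈ H := Subgroup.commutatorElement_mem hA hT
  have hEa : ⁅AtilGL, ⁅AtilGL, TtilGL⁆⁆ ∈ H := Subgroup.commutatorElement_mem hA hEb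
  obtain ⟨x, y, z, hXpow⟩ := exists_gammaMat_eq_pow_mul 0 4 4 n a b c
  have hX' : X = AtilGL ^ n.val * ⁅AtilGL, ⁅AtilGL, TtilGL⁆⁆ ^ x * ⁅AtilGL, TtilGL⁆ ^ y *
      TtilGL ^ z := by
    ext1
    simp only [Units.val_mul, Units.val_pow_eq_pow_val, hX, hXpow, val_AtilGL, val_TtilGL,
      val_commutator_AtilGL_TtilGL, val_commutator_AtilGL_commutator]
  rw [hX']
  exact mul_mem (mul_mem (mul_mem (pow_mem hA _) (pow_mem hEa _)) (pow_mem hEb _)) (pow_mem hT _)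

theorem closure_AtilGL_TtilGL_eq_gammaHat : Subgroup.closure {AtilGL, TtilGL} = gammaHat :=
  le_antisymm closure_AtilGL_TtilGL_le_gammaHat gammaHat_le_closure_AtilGL_TtilGL

/-- Main Theorem: the subgroup of `GL(4, ℤ/5ℤ)` generated by `Ã` and `T̃`
is exactly `Γ̂`. -/
theorem main_theorem (X : GL (Fin 4) (ZMod 5)) :
    X ∈ Subgroup.closure {AtilGL, TtilGL} ↔
      ∃ n a b c : ZMod 5,
        (X : Matrix (Fin 4) (Fin 4) (ZMod 5)) =
          !![1, n, 3 * n ^ 2 + 2 * n, a; 0, 1, n, b; 0, 0, 1, c; 0, 0, 0, 1] := by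
  rw [closure_AtilGL_TtilGL_eq_gammaHat]
  rfl
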